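/- arXiv:2010.04079 — 3 statements merged into one kernel-verified Lean document; each statement's English description precedes it below -/
import Mathlib

section
/- Fix k ≤ n and let M be the k × n matrix with entries m_{i,j} = (i-1)(n-j+1). For any k-subset J = {j_1 < j_2 < ... < j_k} of [n], the unique permutation σ ∈ S_k minimizing the weight Σ_{i=1}^k m_{i, j_{σ(i)}} is the identity permutation. In other words, the minimum of Σ_i m_{i, j_{σ(i)}} over σ ∈ S_k is attained only at σ = id. -/
/-!
The weight of `σ` is `∑ i, f i * g (σ i)` with `f i = i` strictly increasing and
`g i = n - j_i` strictly decreasing, so this is the rearrangement inequality. In its equality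
case `f` and `g ∘ σ` still antivary; strictness of `f` and `g` then forces `σ` to be monotone,
and the only monotone permutation of a finite chain is the identity.
-/

/-- The diagonal weight matrix entry `m_{i,j} = (i-1)(n-j+1)` (here written 0-indexed:
row `i : Fin k`, column `j : Fin n`, with value `i * (n - j)`). -/
def diagWeight (n : ℕ) {k : ℕ} (i : Fin k) (j : Fin n) : ℝ :=
  ((i : ℕ) : ℝ) * ((n : ℝ) - ((j : ℕ) : ℝ))

theorem Equiv.Perm.eq_one_of_monotone {α : Type*} [LinearOrder α] [WellFoundedLT α]
    {σ : Equiv.Perm α} (hσ : Monotone σ) : σ = 1 := by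
  let e : α ≃o α :=
    (hσ.strictMono_of_injective σ.injective).orderIsoOfSurjective σ σ.surjective
  ext a
  exact congrArg (· a) (Subsingleton.elim e (OrderIso.refl α))

section Rearrangement

variable {ι α : Type*} [Fintype ι] [LinearOrder ι]
  [Semiring α] [LinearOrder α] [IsStrictOrderedRing α] [ExistsAddOfLE α]
  {f g : ι → α}

theorem StrictMono.eq_one_of_sum_mul_comp_perm_eq (hf : StrictMono f) (hg : StrictAnti g)
    {σ : Equiv.Perm ι} (h : ∑ i, f i * g (σ i) = ∑ i, f i * g i) : σ = 1 := by
  have hanti : Antivary f (g ∘ σ) :=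
    (hf.monotone.antivary hg.antitone).sum_mul_eq_sum_mul_comp_perm_iff.mp h
  have hgσ : Antitone (g ∘ σ) := hf.trans_antivary (antivary_comm.mp hanti)
  exact Equiv.Perm.eq_one_of_monotone fun i j hij => hg.le_iff_ge.mp (hgσ hij)

end Rearrangement

theorem stmt4_general {k n : ℕ} (J : Fin k → Fin n) (hJ : StrictMono J)
    (σ : Equiv.Perm (Fin k)) :
    (∑ i : Fin k, diagWeight n i (J i)) ≤ (∑ i : Fin k, diagWeight n i (J (σ i))) ∧
    ((∑ i : Fin k, diagWeight n i (J i)) = (∑ i : Fin k, diagWeight n i (J (σ i))) → σ = 1) := by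
  have hrow : StrictMono fun i : Fin k => ((i : ℕ) : ℝ) :=
    fun i j hij => Nat.cast_lt.mpr hij
  have hcol : StrictAnti fun i : Fin k => (n : ℝ) - ((J i : ℕ) : ℝ) :=
    fun i j hij => sub_lt_sub_left (Nat.cast_lt.mpr (hJ hij)) _
  exact ⟨(hrow.monotone.antivary hcol.antitone).sum_mul_le_sum_mul_comp_perm,
    fun h => hrow.eq_one_of_sum_mul_comp_perm_eq hcol h.symm⟩

theorem stmt4 {k n : ℕ} (hkn : k ≤ n) (J : Fin k → Fin n) (hJ : StrictMono J)
    (σ : Equiv.Perm (Fin k)) :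
    (∑ i : Fin k, diagWeight n i (J i)) ≤ (∑ i : Fin k, diagWeight n i (J (σ i))) ∧
    ((∑ i : Fin k, diagWeight n i (J i)) = (∑ i : Fin k, diagWeight n i (J (σ i))) → σ = 1) :=
  stmt4_general J hJ σ
end

section
/- Fix 2 ≤ k ≤ n and 1 ≤ ℓ ≤ n-1, and let M_ℓ be the k × n matrix with first row zero, second row entries m_{2,j} = ℓ - j + 1 for j ≤ ℓ and m_{2,j} = n - j + ℓ + 1 for j > ℓ, and rows i ≥ 3 with entries m_{i,j} = c_i(n-j+1) for sufficiently rapidly growing constants c_i (e.g. c_i = (n+1)^{i-2}·n appropriately). Then for any k-subset J = {j_1 < ... < j_k} ⊆ [n], the unique permutation σ minimizing Σ_i M_ℓ(i, j_{σ(i)}) is: the transposition (12) if j_1 ≤ ℓ < j_2, and the identity otherwise. -/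
/-- The block diagonal weight matrix `M_ℓ` (0-indexed): first row is zero, the second row
(index 1) is `ℓ - j + 1` for 1-indexed `j ≤ ℓ` and `n - j + ℓ + 1` otherwise, and
rows with index `i ≥ 2` have entries `(n+1)^{i-1} · n · (n - j + 1)` (1-indexed `j`). -/
def blockWeight (n ℓ : ℕ) {k : ℕ} (i : Fin k) (j : Fin n) : ℝ :=
  if (i : ℕ) = 0 then 0
  else if (i : ℕ) = 1 then
    (if (j : ℕ) < ℓ then (ℓ : ℝ) - ((j : ℕ) : ℝ) else (n : ℝ) - ((j : ℕ) : ℝ) + (ℓ : ℝ))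
  else ((n : ℝ) + 1) ^ ((i : ℕ) - 1) * (n : ℝ) * ((n : ℝ) - ((j : ℕ) : ℝ))

/-!
The candidate `B_ℓ(J)` fixes every row `i ≥ 2`. Row 0 of `M_ℓ` is zero, the entries of row 1
differ by less than `n`, and row `i ≥ 2` is `n - j` scaled by `c_i = n (n+1)^(i-1)`, where
`n (c_2 + ⋯ + c_(m-1)) + n ≤ c_m`. If `σ` moves some row `i ≥ 2`, the largest moved row `m` is
sent below itself, so, `J` being increasing, `σ` pays at least `c_m` more than `B_ℓ(J)` in row `m`,
more than the rows below `m` can save. Otherwise `σ` is the identity or `(12)`; these differ only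
in row 1, where comparing the entries at `j_1 < j_2` shows that `B_ℓ(J)` is the cheaper one.
-/

namespace Equiv.Perm

variable {α : Type*}

theorem eq_one_or_eq_swap_of_forall_apply_eq [DecidableEq α] {σ : Perm α} {a b : α}
    (hab : a ≠ b) (hσ : ∀ i, i ≠ a → i ≠ b → σ i = i) : σ = 1 ∨ σ = swap a b := by
  have hmoved : ∀ x, σ x ≠ x → σ x = a ∨ σ x = b := fun x hx => by
    by_contra! h
    exact hx (σ.injective (hσ _ h.1 h.2))
  by_cases ha : σ a = a
  · have hb : σ b = b := by
      by_contra hb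
      rcases hmoved b hb with h | h
      · exact hab (σ.injective (ha.trans h.symm))
      · exact hb h
    left
    ext i
    by_cases hia : i = a
    · simp [hia, ha]
    by_cases hib : i = b
    · simp [hib, hb]
    simp [hσ i hia hib]
  · have hab' : σ a = b := (hmoved a ha).resolve_left ha
    have hba : σ b = a := by
      have hb : σ b ≠ b := fun h => hab (σ.injective (hab'.trans h.symm))
      exact (hmoved b hb).resolve_right hb
    right
    ext i
    by_cases hia : i = a
    · simp [hia, hab']
    by_cases hib : i = b
    · simp [hib, hba]
    simp [hσ i hia hib, swap_apply_of_ne_of_ne hia hib]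

theorem exists_apply_lt_of_apply_ne [LinearOrder α] [Fintype α] {σ : Perm α} {i : α}
    (hi : σ i ≠ i) : ∃ m, i ≤ m ∧ σ m < m ∧ ∀ j, m < j → σ j = j := by
  classical
  have hmem : i ∈ σ.support := mem_support.2 hi
  set m := σ.support.max' ⟨i, hmem⟩
  have hfix : ∀ j, m < j → σ j = j := fun j hj =>
    notMem_support.1 fun hj' => (σ.support.le_max' j hj').not_gt hj
  refine ⟨m, σ.support.le_max' i hmem, ?_, hfix⟩
  have hm : σ m ≠ m := mem_support.1 (σ.support.max'_mem _)
  exact lt_of_le_of_ne (not_lt.1 fun h => hm (σ.injective (hfix _ h))) hm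

end Equiv.Perm

theorem Fin.sum_ite_val_lt_eq_sum_range {M : Type*} [AddCommMonoid M] {k m : ℕ} (f : ℕ → M)
    (hm : m ≤ k) :
    ∑ i : Fin k, (if (i : ℕ) < m then f i else 0) = ∑ i ∈ Finset.range m, f i := by
  rw [Fin.sum_univ_eq_sum_range (fun i => if i < m then f i else 0), ← Finset.sum_filter]
  congr 1
  ext i
  simp only [Finset.mem_filter, Finset.mem_range]
  omega

theorem Fin.swap_zero_one_apply_of_two_le {k : ℕ} (hk : 1 < k) {i : Fin k} (hi : 2 ≤ (i : ℕ)) :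
    Equiv.swap ⟨0, by omega⟩ ⟨1, hk⟩ i = i :=
  Equiv.swap_apply_of_ne_of_ne (by simp [Fin.ext_iff]; omega) (by simp [Fin.ext_iff]; omega)

theorem Fin.perm_eq_one_or_eq_swap_zero_one {k : ℕ} (hk : 1 < k) {π : Equiv.Perm (Fin k)}
    (hπ : ∀ i : Fin k, 2 ≤ (i : ℕ) → π i = i) : π = 1 ∨ π = Equiv.swap ⟨0, by omega⟩ ⟨1, hk⟩ :=
  Equiv.Perm.eq_one_or_eq_swap_of_forall_apply_eq (by simp [Fin.ext_iff]) fun i h₀ h₁ =>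
    hπ i (by simp only [ne_eq, Fin.ext_iff] at h₀ h₁; omega)

namespace BlockWeight

def rowOneWeight (n ℓ x : ℕ) : ℝ :=
  if x < ℓ then (ℓ : ℝ) - x else (n : ℝ) - x + ℓ

def tailWeight (n i : ℕ) : ℝ :=
  if 2 ≤ i then ((n : ℝ) + 1) ^ (i - 1) * n else 0

variable {n ℓ k : ℕ}

theorem rowOneWeight_sub_lt {x y : ℕ} (hy : y < n) :
    rowOneWeight n ℓ x - rowOneWeight n ℓ y < n := by
  have hyR : (y : ℝ) < n := by exact_mod_cast hy
  unfold rowOneWeight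
  split_ifs with hx hy' hy'
  · linarith
  · linarith
  · have : (y : ℝ) < x := by exact_mod_cast hy'.trans_le (not_lt.1 hx)
    linarith
  · linarith

theorem rowOneWeight_lt_of_lt_of_le {x y : ℕ} (hx : x < ℓ) (hy : ℓ ≤ y) (hyn : y < n) :
    rowOneWeight n ℓ x < rowOneWeight n ℓ y := by
  have hyR : (y : ℝ) < n := by exact_mod_cast hyn
  simp only [rowOneWeight, if_pos hx, if_neg (not_lt.2 hy)]
  linarith [(x.cast_nonneg : (0 : ℝ) ≤ x)]

theorem rowOneWeight_lt_of_lt {x y : ℕ} (hxy : x < y) (h : ¬(x < ℓ ∧ ℓ ≤ y)) :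
    rowOneWeight n ℓ y < rowOneWeight n ℓ x := by
  have hxyR : (x : ℝ) < y := by exact_mod_cast hxy
  unfold rowOneWeight
  split_ifs <;> first | linarith | omega

theorem tailWeight_nonneg (n i : ℕ) : 0 ≤ tailWeight n i := by
  unfold tailWeight; split_ifs <;> positivity

theorem mul_sum_tailWeight_add_le {m : ℕ} (hm : 2 ≤ m) :
    n * ∑ i ∈ Finset.range m, tailWeight n i + n ≤ tailWeight n m := by
  induction m, hm using Nat.le_induction with
  | base => norm_num [tailWeight, Finset.sum_range_succ, add_mul, mul_self_nonneg]
  | succ m hm ih =>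
    have hstep : tailWeight n (m + 1) = (n + 1) * tailWeight n m := by
      simp only [tailWeight, if_pos hm, if_pos (hm.trans m.le_succ)]
      rw [show m + 1 - 1 = m - 1 + 1 by omega, pow_succ]
      ring
    rw [Finset.sum_range_succ, hstep]
    linarith

theorem blockWeight_eq (i : Fin k) (x : Fin n) :
    blockWeight n ℓ i x = (if (i : ℕ) = 1 then rowOneWeight n ℓ x else 0)
      + tailWeight n i * (n - (x : ℕ)) := by
  unfold blockWeight rowOneWeight tailWeight
  split_ifs <;> first | omega | ring

theorem sum_blockWeight (hk : 1 < k) (f : Fin k → Fin n) :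
    ∑ i, blockWeight n ℓ i (f i)
      = rowOneWeight n ℓ (f ⟨1, hk⟩) + ∑ i : Fin k, tailWeight n i * (n - (f i : ℕ)) := by
  have hone : ∀ i : Fin k, ((i : ℕ) = 1) ↔ i = ⟨1, hk⟩ := fun i => by simp [Fin.ext_iff]
  simp only [blockWeight_eq, Finset.sum_add_distrib, hone, Finset.sum_ite_eq', Finset.mem_univ,
    if_true]

theorem sum_tailWeight_comp_of_forall_apply_eq {π : Equiv.Perm (Fin k)}
    (hπ : ∀ i : Fin k, 2 ≤ (i : ℕ) → π i = i) (g : Fin k → ℝ) :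
    ∑ i : Fin k, tailWeight n i * g (π i) = ∑ i : Fin k, tailWeight n i * g i := by
  refine Finset.sum_congr rfl fun i _ => ?_
  by_cases hi : 2 ≤ (i : ℕ)
  · rw [hπ i hi]
  · simp [tailWeight, hi]

theorem sum_tailWeight_add_le_of_apply_lt (a : Fin k → ℕ) (ha : StrictMono a)
    (han : ∀ i, a i ≤ n) {σ : Equiv.Perm (Fin k)} {m : Fin k} (hm : 2 ≤ (m : ℕ))
    (hσm : σ m < m) (hfix : ∀ j, m < j → σ j = j) :
    ∑ i : Fin k, tailWeight n i * (n - a i) + n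
      ≤ ∑ i : Fin k, tailWeight n i * (n - a (σ i)) := by
  set d : Fin k → ℝ := fun i => tailWeight n i * (a i - a (σ i))
  have hdiff : ∑ i : Fin k, tailWeight n i * (n - a (σ i))
      = ∑ i : Fin k, tailWeight n i * (n - a i) + ∑ i, d i := by
    rw [← Finset.sum_add_distrib]
    exact Finset.sum_congr rfl fun i _ => by ring
  have hgain : tailWeight n m ≤ d m := by
    have : (a (σ m) : ℝ) + 1 ≤ a m := by exact_mod_cast ha hσm
    exact le_mul_of_one_le_right (tailWeight_nonneg n m) (by linarith)
  have hloss : ∀ i ∈ Finset.univ.erase m,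
      -(n * if (i : ℕ) < m then tailWeight n i else 0) ≤ d i := by
    intro i hi
    rcases lt_or_gt_of_ne (Finset.ne_of_mem_erase hi) with hlt | hgt
    · have : (a (σ i) : ℝ) ≤ n := by exact_mod_cast han (σ i)
      simp only [d, if_pos (show (i : ℕ) < m from hlt)]
      nlinarith [tailWeight_nonneg n i, (a i).cast_nonneg (α := ℝ)]
    · simp [d, hfix i hgt, show ¬(i : ℕ) < m from not_lt.2 hgt.le]
  have hloss_sum : -(n * ∑ i ∈ Finset.univ.erase m, if (i : ℕ) < m then tailWeight n i else 0)
      ≤ ∑ i ∈ Finset.univ.erase m, d i := by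
    rw [Finset.mul_sum, ← Finset.sum_neg_distrib]
    exact Finset.sum_le_sum hloss
  have hlower : ∑ i ∈ Finset.univ.erase m, (if (i : ℕ) < m then tailWeight n i else 0)
      ≤ ∑ i ∈ Finset.range m, tailWeight n i := by
    rw [← Fin.sum_ite_val_lt_eq_sum_range _ m.isLt.le]
    refine Finset.sum_le_sum_of_subset_of_nonneg (Finset.erase_subset _ _) fun i _ _ => ?_
    split_ifs
    exacts [tailWeight_nonneg n i, le_rfl]
  have hgeom := mul_sum_tailWeight_add_le (n := n) hm
  have hsplit : ∑ i, d i = d m + ∑ i ∈ Finset.univ.erase m, d i :=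
    (Finset.add_sum_erase _ _ (Finset.mem_univ m)).symm
  linarith [mul_le_mul_of_nonneg_left hlower (n.cast_nonneg (α := ℝ))]

end BlockWeight

open BlockWeight Equiv

theorem stmt5 (k n ℓ : ℕ) (hk : 2 ≤ k)
    (J : Fin k → Fin n) (hJ : StrictMono J) (σ : Equiv.Perm (Fin k))
    (hσ : σ ≠ (if (J ⟨0, by omega⟩ : ℕ) < ℓ ∧ ℓ ≤ (J ⟨1, by omega⟩ : ℕ) then
        Equiv.swap (⟨0, by omega⟩ : Fin k) ⟨1, by omega⟩ else 1)) :
    (∑ i : Fin k, blockWeight n ℓ i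
        (J (((if (J ⟨0, by omega⟩ : ℕ) < ℓ ∧ ℓ ≤ (J ⟨1, by omega⟩ : ℕ) then
          Equiv.swap (⟨0, by omega⟩ : Fin k) ⟨1, by omega⟩ else 1) : Equiv.Perm (Fin k)) i)))
      < ∑ i : Fin k, blockWeight n ℓ i (J (σ i)) := by
  set e₀ : Fin k := ⟨0, by omega⟩
  set e₁ : Fin k := ⟨1, by omega⟩
  set τ : Perm (Fin k) := if (J e₀ : ℕ) < ℓ ∧ ℓ ≤ (J e₁ : ℕ) then swap e₀ e₁ else 1 with hτ
  have hτ_fix : ∀ i : Fin k, 2 ≤ (i : ℕ) → τ i = i := fun i hi => by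
    rw [hτ]
    split_ifs
    exacts [Fin.swap_zero_one_apply_of_two_le (by omega) hi, rfl]
  rw [sum_blockWeight (by omega) fun i => J (τ i), sum_blockWeight (by omega) fun i => J (σ i),
    sum_tailWeight_comp_of_forall_apply_eq hτ_fix fun j => (n : ℝ) - (J j : ℕ)]
  by_cases hmoved : ∃ i : Fin k, 2 ≤ (i : ℕ) ∧ σ i ≠ i
  · obtain ⟨i, hi, hσi⟩ := hmoved
    obtain ⟨m, him, hσm, hfix⟩ := Perm.exists_apply_lt_of_apply_ne hσi
    have htail := sum_tailWeight_add_le_of_apply_lt (fun j => (J j : ℕ))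
      (Fin.val_strictMono.comp hJ) (fun j => (J j).isLt.le) (hi.trans him) hσm hfix
    have hrow := rowOneWeight_sub_lt (ℓ := ℓ) (x := J (τ e₁)) (J (σ e₁)).isLt
    linarith
  · push Not at hmoved
    rw [sum_tailWeight_comp_of_forall_apply_eq hmoved fun j => (n : ℝ) - (J j : ℕ),
      add_lt_add_iff_right]
    rcases Fin.perm_eq_one_or_eq_swap_zero_one (by omega) hmoved with rfl | rfl
    · have hc : (J e₀ : ℕ) < ℓ ∧ ℓ ≤ (J e₁ : ℕ) :=
        by_contra fun hc => hσ (by rw [hτ, if_neg hc])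
      rw [hτ, if_pos hc, swap_apply_right, Perm.one_apply]
      exact rowOneWeight_lt_of_lt_of_le hc.1 hc.2 (J e₁).isLt
    · have hc : ¬((J e₀ : ℕ) < ℓ ∧ ℓ ≤ (J e₁ : ℕ)) := fun hc => hσ (by rw [hτ, if_pos hc])
      rw [hτ, if_neg hc, swap_apply_right, Perm.one_apply]
      exact rowOneWeight_lt_of_lt (hJ (Fin.mk_lt_mk.2 Nat.one_pos)) hc
end

section
/- Fix n ≥ 5 and 3 ≤ λ ≤ n-1, and consider the intermediate matching fields B^{λ-1}_1 and B^λ_1 for Gr(3,n). Let S_{λ-1} and S_λ be the vertex sets of P_{B^{λ-1}_1} and P_{B^λ_1} in ℝ^{3×n}. Then S_λ is obtained from S_{λ-1} by replacing, for each k with λ < k ≤ n, the vertex corresponding to tuple (2, λ, k) by the vertex corresponding to (λ, 2, k), and keeping all other vertices fixed. Equivalently, the symmetric difference of the two vertex sets is exactly {v_{(2,λ,k)}, v_{(λ,2,k)} : λ < k ≤ n}. -/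
/-- The vertex of `ℝ^{3×n}` associated to a tuple `(a,b,c)` of elements of `[n] = {1,...,n}`
(1-indexed): `e_{1,a} + e_{2,b} + e_{3,c}`. -/
def tupleVertex (n : ℕ) (a b c : ℕ) : EuclideanSpace ℝ (Fin 3 × Fin n) :=
  WithLp.toLp 2 fun p : Fin 3 × Fin n =>
    if (p.1 = 0 ∧ (p.2 : ℕ) + 1 = a) ∨ (p.1 = 1 ∧ (p.2 : ℕ) + 1 = b) ∨
        (p.1 = 2 ∧ (p.2 : ℕ) + 1 = c) then 1 else 0

/-- The set of tuples of the intermediate matching field `B^m_1` for Gr(3,n) (case `m < n`):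
for `I = {p < q < r} ⊆ [n]` the tuple is `(p,q,r)` if `(p = 2 ∧ m < q) ∨ 2 < p`
(identity permutation) and `(q,p,r)` otherwise (transposition (12)). -/
def interTuples (n m : ℕ) : Set (ℕ × ℕ × ℕ) :=
  { t | ∃ p q r : ℕ, 1 ≤ p ∧ p < q ∧ q < r ∧ r ≤ n ∧
      t = if (p = 2 ∧ m < q) ∨ 2 < p then (p, q, r) else (q, p, r) }

lemma tupleVertex_inj {n a b c a' b' c' : ℕ}
    (ha : 1 ≤ a) (han : a ≤ n) (hb : 1 ≤ b) (hbn : b ≤ n) (hc : 1 ≤ c) (hcn : c ≤ n)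
    (h : tupleVertex n a b c = tupleVertex n a' b' c') : a = a' ∧ b = b' ∧ c = c' := by
  have key : ∀ (x : Fin 3 × Fin n),
      tupleVertex n a b c x = tupleVertex n a' b' c' x := fun x => congrFun (congrArg WithLp.ofLp h) x
  refine ⟨?_, ?_, ?_⟩
  · have h0 := key (0, ⟨a - 1, by omega⟩)
    simp [tupleVertex] at h0
    rw [if_pos (by omega : a - 1 + 1 = a)] at h0
    by_cases hv : a - 1 + 1 = a'
    · omega
    · rw [if_neg hv] at h0; norm_num at h0
  · have h0 := key (1, ⟨b - 1, by omega⟩)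
    simp [tupleVertex] at h0
    rw [if_pos (by omega : b - 1 + 1 = b)] at h0
    by_cases hv : b - 1 + 1 = b'
    · omega
    · rw [if_neg hv] at h0; norm_num at h0
  · have h0 := key (2, ⟨c - 1, by omega⟩)
    simp [tupleVertex] at h0
    rw [if_pos (by omega : c - 1 + 1 = c)] at h0
    by_cases hv : c - 1 + 1 = c'
    · omega
    · rw [if_neg hv] at h0; norm_num at h0

lemma image_symmDiff_of_injOn {α β : Type*} (f : α → β) (A B : Set α)
    (hf : Set.InjOn f (A ∪ B)) :
    symmDiff (f '' A) (f '' B) = f '' (symmDiff A B) := by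
  rw [Set.symmDiff_def, Set.symmDiff_def, Set.image_union]
  have hd : ∀ (S T : Set α), S ⊆ A ∪ B → T ⊆ A ∪ B → f '' S \ f '' T = f '' (S \ T) := by
    intro S T hS hT
    ext x
    constructor
    · rintro ⟨⟨a, haS, rfl⟩, hnot⟩
      exact ⟨a, ⟨haS, fun haT => hnot ⟨a, haT, rfl⟩⟩, rfl⟩
    · rintro ⟨a, ⟨haS, haT⟩, rfl⟩
      refine ⟨⟨a, haS, rfl⟩, ?_⟩
      rintro ⟨b, hbT, hba⟩
      exact haT (hf (hT hbT) (hS haS) hba ▸ hbT)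
  rw [hd A B Set.subset_union_left Set.subset_union_right,
    hd B A Set.subset_union_right Set.subset_union_left]

theorem stmt11 (n m : ℕ) (hn : 5 ≤ n) (hm1 : 3 ≤ m) (hm2 : m ≤ n - 1) :
    symmDiff
      ((fun t : ℕ × ℕ × ℕ => tupleVertex n t.1 t.2.1 t.2.2) '' interTuples n (m - 1))
      ((fun t : ℕ × ℕ × ℕ => tupleVertex n t.1 t.2.1 t.2.2) '' interTuples n m)
    = {x | ∃ k : ℕ, m < k ∧ k ≤ n ∧ (x = tupleVertex n 2 m k ∨ x = tupleVertex n m 2 k)} := by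
  have hvalid : ∀ M : ℕ, ∀ t ∈ interTuples n M,
      1 ≤ t.1 ∧ t.1 ≤ n ∧ 1 ≤ t.2.1 ∧ t.2.1 ≤ n ∧ 1 ≤ t.2.2 ∧ t.2.2 ≤ n := by
    rintro M t ⟨p, q, r, h1, h2, h3, h4, rfl⟩
    split_ifs <;> dsimp only <;> omega
  have hinj : Set.InjOn (fun t : ℕ × ℕ × ℕ => tupleVertex n t.1 t.2.1 t.2.2)
      (interTuples n (m - 1) ∪ interTuples n m) := by
    rintro ⟨a, b, c⟩ ht1 ⟨a', b', c'⟩ ht2 hf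
    have v1 := ht1.elim (hvalid _ _) (hvalid _ _)
    have v2 := ht2.elim (hvalid _ _) (hvalid _ _)
    dsimp only at v1 v2 hf
    obtain ⟨e1, e2, e3⟩ := tupleVertex_inj v1.1 v1.2.1 v1.2.2.1 v1.2.2.2.1
      v1.2.2.2.2.1 v1.2.2.2.2.2 hf
    simp only [Prod.mk.injEq]
    exact ⟨e1, e2, e3⟩
  rw [image_symmDiff_of_injOn _ _ _ hinj]
  have hD : symmDiff (interTuples n (m - 1)) (interTuples n m)
      = {t : ℕ × ℕ × ℕ | ∃ k, m < k ∧ k ≤ n ∧ (t = (2, m, k) ∨ t = (m, 2, k))} := by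
    ext t
    simp only [Set.mem_symmDiff, Set.mem_setOf_eq]
    constructor
    · rintro (⟨⟨p, q, r, h1, h2, h3, h4, ht⟩, hnot⟩ | ⟨⟨p, q, r, h1, h2, h3, h4, ht⟩, hnot⟩)
      · by_cases hpq : q = m ∧ p = 2
        · rw [if_pos (by left; exact ⟨hpq.2, by omega⟩)] at ht
          refine ⟨r, by omega, h4, Or.inl ?_⟩
          rw [ht, hpq.1, hpq.2]
        · exfalso; apply hnot
          refine ⟨p, q, r, h1, h2, h3, h4, ?_⟩
          rw [ht]
          have hiff : ((p = 2 ∧ m - 1 < q) ∨ 2 < p) ↔ ((p = 2 ∧ m < q) ∨ 2 < p) := by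
            constructor
            · rintro (⟨hp, hlt⟩ | hgt)
              · left
                exact ⟨hp, by have := fun hqm => hpq ⟨hqm, hp⟩; omega⟩
              · right; exact hgt
            · rintro (⟨hp, hlt⟩ | hgt)
              · left; exact ⟨hp, by omega⟩
              · right; exact hgt
          exact if_congr hiff rfl rfl
      · by_cases hpq : q = m ∧ p = 2
        · rw [if_neg (by omega)] at ht
          refine ⟨r, by omega, h4, Or.inr ?_⟩
          rw [ht, hpq.1, hpq.2]
        · exfalso; apply hnot
          refine ⟨p, q, r, h1, h2, h3, h4, ?_⟩
          rw [ht]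
          have hiff : ((p = 2 ∧ m < q) ∨ 2 < p) ↔ ((p = 2 ∧ m - 1 < q) ∨ 2 < p) := by
            constructor
            · rintro (⟨hp, hlt⟩ | hgt)
              · left; exact ⟨hp, by omega⟩
              · right; exact hgt
            · rintro (⟨hp, hlt⟩ | hgt)
              · left
                exact ⟨hp, by have := fun hqm => hpq ⟨hqm, hp⟩; omega⟩
              · right; exact hgt
          exact if_congr hiff rfl rfl
    · rintro ⟨k, hk1, hk2, rfl | rfl⟩
      · left
        constructor
        · exact ⟨2, m, k, by omega, by omega, hk1, hk2, by rw [if_pos (by left; omega)]⟩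
        · rintro ⟨p, q, r, h1, h2, h3, h4, ht⟩
          split_ifs at ht with hC <;> simp only [Prod.mk.injEq] at ht <;> omega
      · right
        constructor
        · exact ⟨2, m, k, by omega, by omega, hk1, hk2, by rw [if_neg (by omega)]⟩
        · rintro ⟨p, q, r, h1, h2, h3, h4, ht⟩
          split_ifs at ht with hC <;> simp only [Prod.mk.injEq] at ht <;> omega
  rw [hD]
  ext x
  simp only [Set.mem_image, Set.mem_setOf_eq]
  constructor
  · rintro ⟨t, ⟨k, hk1, hk2, rfl | rfl⟩, rfl⟩
    · exact ⟨k, hk1, hk2, Or.inl rfl⟩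
    · exact ⟨k, hk1, hk2, Or.inr rfl⟩
  · rintro ⟨k, hk1, hk2, rfl | rfl⟩
    · exact ⟨(2, m, k), ⟨k, hk1, hk2, Or.inl rfl⟩, rfl⟩
    · exact ⟨(m, 2, k), ⟨k, hk1, hk2, Or.inr rfl⟩, rfl⟩
end
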